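/- Let R be a ring, A a right ideal of R with a serial factorization A = A_1⋯A_n, and B a right ideal of R containing A. If B has a serial factorization, then B is the product of those right ideals B + A_i (i = 1, …, n) that are proper in R, and this product (of the proper factors B + A_i, taken in the order of increasing i) is a serial factorization of B. -/

import Mathlib

open MulOpposite

universe u

/-- The product `A·B` of two right ideals of `R` (right ideals are `Rᵐᵒᵖ`-submodules of `R`):
the set of all finite sums of products `a * b` with `a ∈ A`, `b ∈ B`. -/
def rmul {R : Type u} [Ring R] (A B : Submodule Rᵐᵒᵖ R) : Submodule Rᵐᵒᵖ R :=
  Submodule.span Rᵐᵒᵖ {x : R | ∃ a ∈ A, ∃ b ∈ B, x = a * b}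

/-- The product `A₁⋯Aₙ` of a (possibly empty) list of right ideals. -/
def rprod {R : Type u} [Ring R] : List (Submodule Rᵐᵒᵖ R) → Submodule Rᵐᵒᵖ R
  | [] => ⊤
  | [A] => A
  | A :: l => rmul A (rprod l)

/-- A finite family of right ideals is coindependent if `Aᵢ + ⋂_{j ≠ i} Aⱼ = R` for every `i`. -/
def Coindep {R : Type u} [Ring R] {n : ℕ} (A : Fin n → Submodule Rᵐᵒᵖ R) : Prop :=
  ∀ i, A i ⊔ (⨅ j, ⨅ (_ : j ≠ i), A j) = ⊤

/-- A module is uniserial if its submodules are linearly ordered by inclusion. -/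
def IsUniserialMod (S : Type*) [Ring S] (M : Type*) [AddCommGroup M] [Module S M] : Prop :=
  ∀ N P : Submodule S M, N ≤ P ∨ P ≤ N

/-- A right ideal is a two-sided ideal if it is also closed under left multiplication. -/
def IsTwoSidedRid {R : Type u} [Ring R] (A : Submodule Rᵐᵒᵖ R) : Prop :=
  ∀ (r : R), ∀ x ∈ A, r * x ∈ A

/-- A serial factorization of a right ideal `A`: a factorization `A = A₁⋯Aₙ` into proper
right ideals that pairwise commute, form a coindependent family, and are such that every
quotient `R/Aᵢ` is a uniserial right `R`-module. -/
def IsSerialFact {R : Type u} [Ring R] {n : ℕ} (A : Submodule Rᵐᵒᵖ R)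
    (F : Fin n → Submodule Rᵐᵒᵖ R) : Prop :=
  (∀ i, F i ≠ ⊤) ∧ (∀ i j, rmul (F i) (F j) = rmul (F j) (F i)) ∧ Coindep F ∧
    (∀ i, IsUniserialMod Rᵐᵒᵖ (R ⧸ F i)) ∧ A = rprod (List.ofFn F)

/-- A right ideal has a serial factorization if it admits one of some length. -/
def HasSerialFact {R : Type u} [Ring R] (A : Submodule Rᵐᵒᵖ R) : Prop :=
  ∃ (n : ℕ) (F : Fin n → Submodule Rᵐᵒᵖ R), IsSerialFact A F

/-- A right chain ring: its right ideals are linearly ordered by inclusion. -/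
def IsRightChainRing (R : Type u) [Ring R] : Prop :=
  ∀ A B : Submodule Rᵐᵒᵖ R, A ≤ B ∨ B ≤ A

/-- A ring is right duo if every right ideal is a two-sided ideal. -/
def IsRightDuo (R : Type u) [Ring R] : Prop :=
  ∀ A : Submodule Rᵐᵒᵖ R, IsTwoSidedRid A

/-- The principal right ideal `rR`. -/
def rspan {R : Type u} [Ring R] (r : R) : Submodule Rᵐᵒᵖ R :=
  Submodule.span Rᵐᵒᵖ ({r} : Set R)

/-!
Commuting, pairwise comaximal right ideals multiply to their intersection, so `A = ⋂ Aᵢ` and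
`B = ⋂ Cⱼ` for a serial factorization `(Cⱼ)` of `B`. A proper right ideal `X ⊇ ⋂ Aᵢ` with `R/X`
uniserial is comaximal with all but one `Aᵢ`: two proper sums `X + Aᵢ`, `X + Aₖ` would be
comparable, yet their sum contains `Aᵢ + ⋂_{k ≠ i} Aₖ = R`. It also contains that remaining `Aᵢ`,
since `X + ∏_{k ≠ i} Aₖ = R` and `(∏_{k ≠ i} Aₖ) Aᵢ = ⋂ Aₖ ⊆ X`. Applied to the `Cⱼ` this gives an
injection `j ↦ i(j)` with `Cⱼ = B + A_{i(j)}` and `B + Aᵢ = R` for all other `i`, so the proper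
`B + Aᵢ` are exactly the `Cⱼ`, each once, and listing them in any order is again a serial
factorization of `B`.
-/

section Products

variable {R : Type u} [Ring R]

open scoped Pointwise

lemma mul_mem_rmul {A B : Submodule Rᵐᵒᵖ R} {a b : R} (ha : a ∈ A) (hb : b ∈ B) :
    a * b ∈ rmul A B :=
  Submodule.subset_span ⟨a, ha, b, hb, rfl⟩

lemma rmul_le {A B C : Submodule Rᵐᵒᵖ R} (h : ∀ a ∈ A, ∀ b ∈ B, a * b ∈ C) :
    rmul A B ≤ C :=
  Submodule.span_le.2 fun _ ⟨a, ha, b, hb, hx⟩ => hx ▸ h a ha b hb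

lemma rmul_le_left (A B : Submodule Rᵐᵒᵖ R) : rmul A B ≤ A :=
  rmul_le fun _ ha b _ => A.smul_mem (op b) ha

/-- Since `B` is a right ideal, the products `a * b` are already closed under right
multiplication, so `rmul A B` is their additive closure and no scalar case is needed. -/
lemma rmul_induction {A B : Submodule Rᵐᵒᵖ R} {P : R → Prop} (zero : P 0)
    (add : ∀ x y, P x → P y → P (x + y)) (mul : ∀ a ∈ A, ∀ b ∈ B, P (a * b))
    {x : R} (hx : x ∈ rmul A B) : P x := by
  have hx' : x ∈ AddSubmonoid.closure
      ((Set.univ : Set Rᵐᵒᵖ) • {x : R | ∃ a ∈ A, ∃ b ∈ B, x = a * b}) := by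
    rw [← Submodule.span_eq_closure]; exact hx
  clear hx
  induction hx' using AddSubmonoid.closure_induction with
  | mem y hy =>
    obtain ⟨r, -, _, ⟨a, ha, b, hb, rfl⟩, rfl⟩ := hy
    induction r using MulOpposite.rec' with
    | h r => simpa only [op_smul_eq_mul, mul_assoc] using mul a ha _ (B.smul_mem (op r) hb)
  | zero => exact zero
  | add y z _ _ hy hz => exact add y z hy hz

lemma rmul_top (A : Submodule Rᵐᵒᵖ R) : rmul A ⊤ = A :=
  le_antisymm (rmul_le_left A ⊤) fun a ha => by
    simpa using mul_mem_rmul ha (Submodule.mem_top (x := (1 : R)))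

lemma rmul_assoc (A B C : Submodule Rᵐᵒᵖ R) :
    rmul (rmul A B) C = rmul A (rmul B C) := by
  apply le_antisymm
  · refine rmul_le fun x hx c hc => ?_
    refine rmul_induction (P := fun y => y * c ∈ rmul A (rmul B C)) (by simp)
      (fun y z hy hz => by simpa only [add_mul] using add_mem hy hz)
      (fun a ha b hb => ?_) hx
    simpa only [mul_assoc] using mul_mem_rmul ha (mul_mem_rmul hb hc)
  · refine rmul_le fun a ha x hx => ?_
    refine rmul_induction (P := fun y => a * y ∈ rmul (rmul A B) C) (by simp)
      (fun y z hy hz => by simpa only [mul_add] using add_mem hy hz)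
      (fun b hb c hc => ?_) hx
    simpa only [mul_assoc] using mul_mem_rmul (mul_mem_rmul ha hb) hc

lemma rprod_cons (X : Submodule Rᵐᵒᵖ R) (l : List (Submodule Rᵐᵒᵖ R)) :
    rprod (X :: l) = rmul X (rprod l) := by
  cases l with
  | nil => exact (rmul_top X).symm
  | cons Y l => rfl

lemma rmul_comm_rprod {X : Submodule Rᵐᵒᵖ R} {l : List (Submodule Rᵐᵒᵖ R)} (hl : l ≠ [])
    (h : ∀ Y ∈ l, rmul X Y = rmul Y X) : rmul X (rprod l) = rmul (rprod l) X := by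
  induction l with
  | nil => exact absurd rfl hl
  | cons Y l ih =>
    rcases eq_or_ne l [] with rfl | hl'
    · exact h Y List.mem_cons_self
    · rw [rprod_cons, ← rmul_assoc, h Y List.mem_cons_self, rmul_assoc,
        ih hl' fun Z hZ => h Z (List.mem_cons_of_mem Y hZ), ← rmul_assoc]

lemma le_sup_rmul {X Y : Submodule Rᵐᵒᵖ R} (h : X ⊔ Y = ⊤) (Z : Submodule Rᵐᵒᵖ R) :
    Z ≤ X ⊔ rmul Y Z := by
  obtain ⟨x, hx, y, hy, hxy⟩ := Submodule.mem_sup.1 (h ▸ Submodule.mem_top : (1 : R) ∈ X ⊔ Y)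
  intro z hz
  rw [← one_mul z, ← hxy, add_mul]
  exact add_mem (Submodule.mem_sup_left (X.smul_mem (op z) hx))
    (Submodule.mem_sup_right (mul_mem_rmul hy hz))

lemma le_of_sup_eq_top_of_rmul_le {X Y Z : Submodule Rᵐᵒᵖ R} (h : X ⊔ Y = ⊤)
    (hYZ : rmul Y Z ≤ X) : Z ≤ X :=
  (le_sup_rmul h Z).trans (sup_le le_rfl hYZ)

lemma sup_rmul_eq_top {X Y Z : Submodule Rᵐᵒᵖ R} (hY : X ⊔ Y = ⊤) (hZ : X ⊔ Z = ⊤) :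
    X ⊔ rmul Y Z = ⊤ :=
  top_le_iff.1 (hZ ▸ sup_le le_sup_left (le_sup_rmul hY Z))

lemma sup_rprod_eq_top {X : Submodule Rᵐᵒᵖ R} {l : List (Submodule Rᵐᵒᵖ R)}
    (h : ∀ Y ∈ l, X ⊔ Y = ⊤) : X ⊔ rprod l = ⊤ := by
  induction l with
  | nil => exact sup_top_eq X
  | cons Y l ih =>
    rw [rprod_cons]
    exact sup_rmul_eq_top (h Y List.mem_cons_self) (ih fun Z hZ => h Z (List.mem_cons_of_mem Y hZ))

lemma rmul_eq_inf {X Y : Submodule Rᵐᵒᵖ R} (hco : X ⊔ Y = ⊤) (hcomm : rmul X Y = rmul Y X) :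
    rmul X Y = X ⊓ Y := by
  refine le_antisymm (le_inf (rmul_le_left X Y) (hcomm ▸ rmul_le_left Y X)) ?_
  rintro z ⟨hzX, hzY⟩
  obtain ⟨x, hx, y, hy, hxy⟩ := Submodule.mem_sup.1 (hco ▸ Submodule.mem_top : (1 : R) ∈ X ⊔ Y)
  rw [← one_mul z, ← hxy, add_mul]
  exact add_mem (mul_mem_rmul hx hzY) (hcomm ▸ mul_mem_rmul hy hzX)

lemma rprod_map_eq_iInf {ι : Type*} {F : ι → Submodule Rᵐᵒᵖ R}
    (hco : Pairwise fun i j => F i ⊔ F j = ⊤) (hcm : ∀ i j, rmul (F i) (F j) = rmul (F j) (F i))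
    {l : List ι} (hl : l.Nodup) : rprod (l.map F) = ⨅ i ∈ l, F i := by
  induction l with
  | nil => simp [rprod]
  | cons i l ih =>
    obtain ⟨hil, hl⟩ := List.nodup_cons.1 hl
    simp only [List.map_cons, List.mem_cons, iInf_or, iInf_inf_eq, iInf_iInf_eq_left]
    rcases eq_or_ne l [] with rfl | hne
    · simp [rprod]
    rw [rprod_cons, ← ih hl]
    refine rmul_eq_inf (sup_rprod_eq_top ?_) (rmul_comm_rprod (by simpa using hne) ?_)
    · simp only [List.mem_map]
      rintro _ ⟨j, hj, rfl⟩
      exact hco (ne_of_mem_of_not_mem hj hil).symm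
    · simp only [List.mem_map]
      rintro _ ⟨j, -, rfl⟩
      exact hcm i j

lemma le_total_of_isUniserialMod_quotient {X : Submodule Rᵐᵒᵖ R}
    (h : IsUniserialMod Rᵐᵒᵖ (R ⧸ X)) {C D : Submodule Rᵐᵒᵖ R} (hC : X ≤ C) (hD : X ≤ D) :
    C ≤ D ∨ D ≤ C := by
  have hcomap : ∀ E, X ≤ E → (E.map X.mkQ).comap X.mkQ = E := fun E hE => by
    rw [Submodule.comap_map_mkQ, sup_eq_right.2 hE]
  rw [← hcomap C hC, ← hcomap D hD]
  exact (h _ _).imp (Submodule.comap_mono ·) (Submodule.comap_mono ·)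

lemma eq_top_or_eq_top_of_sup_eq_top {X : Submodule Rᵐᵒᵖ R}
    (h : IsUniserialMod Rᵐᵒᵖ (R ⧸ X)) {C D : Submodule Rᵐᵒᵖ R} (hC : X ≤ C) (hD : X ≤ D)
    (hCD : C ⊔ D = ⊤) : C = ⊤ ∨ D = ⊤ := by
  rcases le_total_of_isUniserialMod_quotient h hC hD with hle | hle
  · exact .inr (sup_eq_right.2 hle ▸ hCD)
  · exact .inl (sup_eq_left.2 hle ▸ hCD)

end Products

section Families

variable {R : Type u} [Ring R] {n : ℕ} {F : Fin n → Submodule Rᵐᵒᵖ R}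

lemma Coindep.pairwise_sup_eq_top (h : Coindep F) : Pairwise fun i j => F i ⊔ F j = ⊤ :=
  fun i j hij => top_le_iff.1 (h i ▸ sup_le_sup_left (iInf₂_le j hij.symm) (F i))

lemma rprod_ofFn_eq_iInf (hco : Pairwise fun i j => F i ⊔ F j = ⊤)
    (hcm : ∀ i j, rmul (F i) (F j) = rmul (F j) (F i)) :
    rprod (List.ofFn F) = ⨅ i, F i := by
  rw [List.ofFn_eq_map, rprod_map_eq_iInf hco hcm (List.nodup_finRange n)]
  simp

lemma coindep_of_pairwise (hco : Pairwise fun i j => F i ⊔ F j = ⊤)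
    (hcm : ∀ i j, rmul (F i) (F j) = rmul (F j) (F i)) : Coindep F := by
  intro i
  have hprod := rprod_map_eq_iInf hco hcm ((List.nodup_finRange n).filter (· ≠ i))
  simp only [List.mem_filter, List.mem_finRange, decide_eq_true_eq, true_and] at hprod
  rw [← hprod]
  refine sup_rprod_eq_top fun Y hY => ?_
  obtain ⟨j, hj, rfl⟩ := List.mem_map.1 hY
  have hji : j ≠ i := by simpa using hj
  exact hco hji.symm

lemma le_of_iInf_le_of_sup_eq_top (hco : Pairwise fun i j => F i ⊔ F j = ⊤)
    (hcm : ∀ i j, rmul (F i) (F j) = rmul (F j) (F i)) {X : Submodule Rᵐᵒᵖ R}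
    (hX : ⨅ i, F i ≤ X) {i₀ : Fin n} (h : ∀ i ≠ i₀, X ⊔ F i = ⊤) : F i₀ ≤ X := by
  set l := (List.finRange n).filter (· ≠ i₀)
  have hmem : ∀ i, i ∈ l ↔ i ≠ i₀ := by simp [l]
  have hprod : rprod ((i₀ :: l).map F) = ⨅ i, F i := by
    rw [rprod_map_eq_iInf hco hcm (List.nodup_cons.2 ⟨by simp, (List.nodup_finRange n).filter _⟩)]
    exact iInf_congr fun i => iInf_pos (by by_cases hi : i = i₀ <;> simp [hi])
  rcases eq_or_ne l [] with hl | hl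
  · rw [hl] at hprod
    exact (show F i₀ = ⨅ i, F i from hprod).le.trans hX
  refine le_of_sup_eq_top_of_rmul_le (Y := rprod (l.map F)) ?_ ?_
  · refine sup_rprod_eq_top fun Y hY => ?_
    obtain ⟨i, hi, rfl⟩ := List.mem_map.1 hY
    exact h i ((hmem i).1 hi)
  · rw [← rmul_comm_rprod (by simpa using hl), ← rprod_cons, ← List.map_cons, hprod]
    · exact hX
    · rintro Y hY
      obtain ⟨i, -, rfl⟩ := List.mem_map.1 hY
      exact hcm i₀ i

lemma exists_sup_ne_top (hco : Pairwise fun i j => F i ⊔ F j = ⊤)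
    (hcm : ∀ i j, rmul (F i) (F j) = rmul (F j) (F i)) {X : Submodule Rᵐᵒᵖ R} (hX : X ≠ ⊤)
    (hFX : ⨅ i, F i ≤ X) : ∃ i, X ⊔ F i ≠ ⊤ := by
  by_contra! h
  have hsup : X ⊔ rprod (List.ofFn F) = ⊤ := sup_rprod_eq_top fun Y hY => by
    obtain ⟨i, rfl⟩ := List.mem_ofFn.1 hY
    exact h i
  rw [rprod_ofFn_eq_iInf hco hcm, sup_eq_left.2 hFX] at hsup
  exact hX hsup

lemma sup_eq_top_of_sup_ne_top (hF : Coindep F) {X : Submodule Rᵐᵒᵖ R}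
    (hXu : IsUniserialMod Rᵐᵒᵖ (R ⧸ X)) {i j : Fin n} (hij : i ≠ j) (hi : X ⊔ F i ≠ ⊤) :
    X ⊔ F j = ⊤ := by
  have hsup : (X ⊔ F i) ⊔ (X ⊔ F j) = ⊤ := top_le_iff.1 <| hF i ▸
    sup_le (le_sup_right.trans le_sup_left) ((iInf₂_le j hij.symm).trans
      (le_sup_right.trans le_sup_right))
  exact (eq_top_or_eq_top_of_sup_eq_top hXu le_sup_left le_sup_left hsup).resolve_left hi

lemma exists_le_and_sup_eq_top (hF : Coindep F)
    (hcm : ∀ i j, rmul (F i) (F j) = rmul (F j) (F i)) {X : Submodule Rᵐᵒᵖ R} (hX : X ≠ ⊤)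
    (hXu : IsUniserialMod Rᵐᵒᵖ (R ⧸ X)) (hFX : ⨅ i, F i ≤ X) :
    ∃ i₀, F i₀ ≤ X ∧ ∀ i ≠ i₀, X ⊔ F i = ⊤ := by
  obtain ⟨i₀, hi₀⟩ := exists_sup_ne_top hF.pairwise_sup_eq_top hcm hX hFX
  have hsup : ∀ i ≠ i₀, X ⊔ F i = ⊤ := fun i hi => sup_eq_top_of_sup_ne_top hF hXu hi.symm hi₀
  exact ⟨i₀, le_of_iInf_le_of_sup_eq_top hF.pairwise_sup_eq_top hcm hFX hsup, hsup⟩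

lemma exists_eq_sup_and_sup_eq_top (hF : Coindep F)
    (hcm : ∀ i j, rmul (F i) (F j) = rmul (F j) (F i))
    (hFu : ∀ i, IsUniserialMod Rᵐᵒᵖ (R ⧸ F i)) {m : ℕ} {B : Submodule Rᵐᵒᵖ R}
    {C : Fin m → Submodule Rᵐᵒᵖ R} (hC : IsSerialFact B C) (hFB : ⨅ i, F i ≤ B) :
    ∃ idx : Fin m → Fin n, ∀ j, C j = B ⊔ F (idx j) ∧ ∀ i ≠ idx j, C j ⊔ F i = ⊤ := by
  obtain ⟨hCtop, hCcm, hCco, hCu, rfl⟩ := hC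
  have hCco := hCco.pairwise_sup_eq_top
  rw [rprod_ofFn_eq_iInf hCco hCcm] at hFB ⊢
  choose idx hle hsup using fun j =>
    exists_le_and_sup_eq_top hF hcm (hCtop j) (hCu j) (hFB.trans (iInf_le C j))
  have hinj : Function.Injective idx := fun j k hjk => by
    by_contra hne
    exact (eq_top_or_eq_top_of_sup_eq_top (hFu (idx j)) (hle j) (hjk ▸ hle k)
      (hCco hne)).elim (hCtop j) (hCtop k)
  refine ⟨idx, fun j => ⟨le_antisymm ?_ (sup_le (iInf_le C j) (hle j)), hsup j⟩⟩
  refine le_of_iInf_le_of_sup_eq_top hCco hCcm le_sup_left fun k hk => top_le_iff.1 ?_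
  rw [← hsup k (idx j) (hinj.ne hk.symm)]
  exact sup_le le_sup_right (le_sup_right.trans le_sup_left)

lemma IsSerialFact.of_injective_of_range_eq {B : Submodule Rᵐᵒᵖ R} {m k : ℕ}
    {C : Fin m → Submodule Rᵐᵒᵖ R} {G : Fin k → Submodule Rᵐᵒᵖ R} (hC : IsSerialFact B C)
    (hG : Function.Injective G) (hGC : Set.range G = Set.range C) : IsSerialFact B G := by
  obtain ⟨hCtop, hCcm, hCco, hCu, rfl⟩ := hC
  have hmem : ∀ p, ∃ j, C j = G p := fun p =>
    Set.mem_range.1 (hGC ▸ Set.mem_range_self p)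
  have hcm : ∀ p q, rmul (G p) (G q) = rmul (G q) (G p) := fun p q => by
    obtain ⟨⟨j, hj⟩, ⟨k, hk⟩⟩ := hmem p, hmem q
    rw [← hj, ← hk]
    exact hCcm j k
  have hco : Pairwise fun p q => G p ⊔ G q = ⊤ := fun p q hpq => by
    obtain ⟨⟨j, hj⟩, ⟨k, hk⟩⟩ := hmem p, hmem q
    rw [← hj, ← hk]
    exact hCco.pairwise_sup_eq_top fun hjk => hG.ne hpq (hj ▸ hk ▸ congrArg C hjk)
  refine ⟨fun p => ?_, hcm, coindep_of_pairwise hco hcm, fun p => ?_, ?_⟩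
  · obtain ⟨j, hj⟩ := hmem p
    exact hj ▸ hCtop j
  · obtain ⟨j, hj⟩ := hmem p
    exact hj ▸ hCu j
  · rw [rprod_ofFn_eq_iInf hco hcm, rprod_ofFn_eq_iInf hCco.pairwise_sup_eq_top hCcm,
      ← sInf_range, ← sInf_range, hGC]

lemma nodup_filter_ofFn_sup (hco : Pairwise fun i j => F i ⊔ F j = ⊤) (B : Submodule Rᵐᵒᵖ R)
    {p : Submodule Rᵐᵒᵖ R → Bool} (hp : ∀ X, p X → X ≠ ⊤) :
    ((List.ofFn fun i => B ⊔ F i).filter p).Nodup := by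
  have hpw : (List.ofFn fun i => B ⊔ F i).Pairwise fun X Y => p X → p Y → X ≠ Y :=
    List.pairwise_ofFn.2 fun i j hij hi _ heq => hp _ hi <| top_le_iff.1 <|
      hco hij.ne ▸ sup_le le_sup_right (heq ▸ le_sup_right)
  exact (hpw.filter p).imp_of_mem fun hX hY h =>
    h (List.of_mem_filter hX) (List.of_mem_filter hY)

lemma isSerialFact_filter_ofFn_sup (hF : Coindep F)
    (hcm : ∀ i j, rmul (F i) (F j) = rmul (F j) (F i))
    (hFu : ∀ i, IsUniserialMod Rᵐᵒᵖ (R ⧸ F i)) {B : Submodule Rᵐᵒᵖ R} (hFB : ⨅ i, F i ≤ B)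
    (hB : HasSerialFact B) {p : Submodule Rᵐᵒᵖ R → Bool} (hp : ∀ X, p X ↔ X ≠ ⊤) :
    IsSerialFact B ((List.ofFn fun i => B ⊔ F i).filter p).get := by
  obtain ⟨m, C, hC⟩ := hB
  obtain ⟨idx, hidx⟩ := exists_eq_sup_and_sup_eq_top hF hcm hFu hC hFB
  refine hC.of_injective_of_range_eq (List.nodup_iff_injective_get.1
    (nodup_filter_ofFn_sup hF.pairwise_sup_eq_top B fun X => (hp X).1)) ?_
  ext X
  simp only [Set.range_list_get, List.mem_filter, hp, List.mem_ofFn, Set.mem_range]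
  constructor
  · rintro ⟨⟨i, rfl⟩, hi⟩
    by_contra! hC'
    have hCi : ∀ j, C j ⊔ F i = ⊤ := fun j => by
      by_contra hj
      exact hC' j (by rw [(hidx j).1, not_imp_comm.1 ((hidx j).2 i) hj])
    have hsup : F i ⊔ rprod (List.ofFn C) = ⊤ := sup_rprod_eq_top fun Y hY => by
      obtain ⟨j, rfl⟩ := List.mem_ofFn.1 hY
      rw [sup_comm]
      exact hCi j
    rw [hC.2.2.2.2, sup_comm] at hi
    exact hi hsup
  · rintro ⟨j, rfl⟩
    exact ⟨⟨idx j, (hidx j).1.symm⟩, hC.1 j⟩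

end Families

open scoped Classical

theorem statement8_general {R : Type u} [Ring R] {n : ℕ}
    (A B : Submodule Rᵐᵒᵖ R) (F : Fin n → Submodule Rᵐᵒᵖ R)
    (hsf : IsSerialFact A F) (hAB : A ≤ B) (hB : HasSerialFact B) :
    B = rprod ((List.ofFn fun i => B ⊔ F i).filter fun X => X ≠ ⊤) ∧
    IsSerialFact B
      (fun j : Fin ((List.ofFn fun i => B ⊔ F i).filter fun X => X ≠ ⊤).length =>
        ((List.ofFn fun i => B ⊔ F i).filter fun X => X ≠ ⊤).get j) := by
  obtain ⟨-, hcm, hF, hFu, rfl⟩ := hsf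
  rw [rprod_ofFn_eq_iInf hF.pairwise_sup_eq_top hcm] at hAB
  have hL := isSerialFact_filter_ofFn_sup hF hcm hFu hAB hB (p := fun X => X ≠ ⊤) (by simp)
  refine ⟨?_, hL⟩
  simpa only [List.ofFn_get] using hL.2.2.2.2

/-- Theorem (Tuesday)(2): if `A = A₁⋯Aₙ` is a serial factorization, `A ⊆ B` and `B` has a
serial factorization, then `B` is the product of those right ideals `B + Aᵢ` that are proper,
and this product (in order of increasing `i`) is a serial factorization of `B`. -/
theorem statement8 {R : Type u} [Ring R] [Nontrivial R] {n : ℕ}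
    (A B : Submodule Rᵐᵒᵖ R) (F : Fin n → Submodule Rᵐᵒᵖ R)
    (hsf : IsSerialFact A F) (hAB : A ≤ B) (hB : HasSerialFact B) :
    B = rprod ((List.ofFn fun i => B ⊔ F i).filter fun X => X ≠ ⊤) ∧
    IsSerialFact B
      (fun j : Fin ((List.ofFn fun i => B ⊔ F i).filter fun X => X ≠ ⊤).length =>
        ((List.ofFn fun i => B ⊔ F i).filter fun X => X ≠ ⊤).get j) :=
  statement8_general A B F hsf hAB hB
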